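/- arXiv:math/0510374 — 3 statements merged into one kernel-verified Lean document; each statement's English description precedes it below -/
import Mathlib

section
/- Let S be an abelian Sylow p-subgroup of a finite group G, let P, Q ≤ S be subgroups, and let g ∈ G satisfy gPg⁻¹ ≤ Q. Then there exists n ∈ N_G(S) such that nxn⁻¹ = gxg⁻¹ for all x ∈ P. In particular, conjugation maps between subgroups of S induced by G are restrictions of automorphisms of S induced by N_G(S). -/
/-!
Burnside's argument: both `S` and `g S g⁻¹` centralize `g P g⁻¹` (since `S` is abelian and
contains `P` and `g P g⁻¹`), so they are Sylow subgroups of its centralizer `C`. Sylow's theorem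
in `C` gives `c ∈ C` with `c g S g⁻¹ c⁻¹ = S`; then `n = c g` normalizes `S` and acts on `P`
as `g` does, because `c` fixes `g P g⁻¹` pointwise.
-/

open Subgroup

namespace Sylow

variable {G : Type*} [Group G] {p : ℕ} [Fact p.Prime] [Finite (Sylow p G)]

theorem exists_mem_centralizer_mul_mem_normalizer (S : Sylow p G) {s : Set G} (g : G)
    (hS : (S : Subgroup G) ≤ centralizer s)
    (hgS : ((g • S : Sylow p G) : Subgroup G) ≤ centralizer s) :
    ∃ c ∈ centralizer s, c * g ∈ normalizer ((S : Subgroup G) : Set G) := by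
  obtain ⟨c, hc⟩ :=
    MulAction.exists_smul_eq (centralizer s) ((g • S).subtype hgS) (S.subtype hS)
  simp_rw [smul_subtype, Subgroup.smul_def, smul_smul] at hc
  exact ⟨c, c.prop, smul_eq_iff_mem_normalizer.mp (subtype_injective hc)⟩

theorem exists_mem_normalizer_conj_eq_of_subset_centralizer (S : Sylow p G) {s : Set G} (g : G)
    (hs : s ⊆ centralizer (S : Set G))
    (hgs : ∀ x ∈ s, g * x * g⁻¹ ∈ centralizer (S : Set G)) :
    ∃ n ∈ normalizer ((S : Subgroup G) : Set G), ∀ x ∈ s, n * x * n⁻¹ = g * x * g⁻¹ := by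
  set t := (fun x => g * x * g⁻¹) '' s
  have hSt : (S : Subgroup G) ≤ centralizer t := by
    rintro y hy - ⟨x, hx, rfl⟩
    exact (hgs x hx y hy).symm
  have hgSt : ((g • S : Sylow p G) : Subgroup G) ≤ centralizer t := by
    rintro - ⟨y, hy, rfl⟩ - ⟨x, hx, rfl⟩
    exact ((Commute.conj_iff g).mpr (hs hx y hy)).eq.symm
  obtain ⟨c, hc, hn⟩ := S.exists_mem_centralizer_mul_mem_normalizer g hSt hgSt
  refine ⟨c * g, hn, fun x hx => ?_⟩
  have hcx : Commute c (g * x * g⁻¹) := (hc _ ⟨x, hx, rfl⟩).symm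
  calc c * g * x * (c * g)⁻¹ = c * (g * x * g⁻¹) * c⁻¹ := by group
    _ = g * x * g⁻¹ := hcx.mul_inv_cancel

end Sylow

theorem stmt_8 (p : ℕ) [Fact p.Prime] (G : Type) [Group G] [Finite G]
    (S : Sylow p G) (hab : ∀ a ∈ (S : Subgroup G), ∀ b ∈ (S : Subgroup G), a * b = b * a)
    (P Q : Subgroup G) (hP : P ≤ (S : Subgroup G)) (hQ : Q ≤ (S : Subgroup G))
    (g : G) (hg : ∀ x ∈ P, g * x * g⁻¹ ∈ Q) :
    ∃ n ∈ Subgroup.normalizer ((S : Subgroup G) : Set G), ∀ x ∈ P, n * x * n⁻¹ = g * x * g⁻¹ := by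
  have hS : ((S : Subgroup G) : Set G) ⊆ centralizer (S : Set G) := fun a ha b hb => hab b hb a ha
  exact S.exists_mem_normalizer_conj_eq_of_subset_centralizer g (fun x hx => hS (hP hx))
    fun x hx => hS (hQ (hg x hx))
end

section
/- Let S be a finite abelian p-group and W, W' ≤ Aut(S) two subgroups of order prime to p. If the semidirect products W ⋉ S and W' ⋉ S induce the same fusion on S — that is, for all subgroups P, Q ≤ S, the set of homomorphisms P → Q given by restriction of elements of W followed by inclusion equals the corresponding set for W' — then W = W'. -/
section

variable {S : Type} [Group S]

def restrictionHoms (A : Subgroup (MulAut S)) (P Q : Subgroup S) : Set (P → S) :=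
  {f | (∀ x : P, f x ∈ Q) ∧ ∃ w ∈ A, ∀ x : P, f x = w x}

theorem Subgroup.le_of_restrictionHoms_top_subset {A B : Subgroup (MulAut S)}
    (h : restrictionHoms A ⊤ ⊤ ⊆ restrictionHoms B ⊤ ⊤) : A ≤ B := by
  intro w hw
  obtain ⟨-, w', hw', hww'⟩ := h ⟨fun _ => trivial, w, hw, fun _ => rfl⟩
  have hw_eq : w = w' := MulEquiv.ext fun s => hww' ⟨s, trivial⟩
  exact hw_eq ▸ hw'

end

theorem stmt_12_general (S : Type) [CommGroup S]
    (W W' : Subgroup (MulAut S))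
    (hfus : ∀ P Q : Subgroup S,
      {f : P → S | (∀ x : P, f x ∈ Q) ∧ ∃ w ∈ W, ∀ x : P, f x = w (x : S)} =
      {f : P → S | (∀ x : P, f x ∈ Q) ∧ ∃ w ∈ W', ∀ x : P, f x = w (x : S)}) :
    W = W' :=
  le_antisymm (Subgroup.le_of_restrictionHoms_top_subset (hfus ⊤ ⊤).le)
    (Subgroup.le_of_restrictionHoms_top_subset (hfus ⊤ ⊤).ge)

theorem stmt_12 (p : ℕ) (hp : p.Prime) (S : Type) [CommGroup S] [Finite S]
    (hS : IsPGroup p S)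
    (W W' : Subgroup (MulAut S))
    (hW : ¬ p ∣ Nat.card W) (hW' : ¬ p ∣ Nat.card W')
    (hfus : ∀ P Q : Subgroup S,
      {f : P → S | (∀ x : P, f x ∈ Q) ∧ ∃ w ∈ W, ∀ x : P, f x = w (x : S)} =
      {f : P → S | (∀ x : P, f x ∈ Q) ∧ ∃ w ∈ W', ∀ x : P, f x = w (x : S)}) :
    W = W' :=
  stmt_12_general S W W' hfus
end

section
/- Let G be a finite group, S a Sylow p-subgroup, and P ≤ S a subgroup that is fully normalized in the fusion system F_S(G), i.e., |N_S(P)| ≥ |N_S(P')| for every subgroup P' ≤ S that is G-conjugate to P. Then the image Aut_S(P) of N_S(P) in Aut(P) is a Sylow p-subgroup of Aut_G(P) := N_G(P)/C_G(P). -/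
variable (G : Type) [Group G]

/-- `Aut_G(P) = N_G(P)/C_G(P)`, realized as the subgroup of automorphisms of
`P` (viewed inside its normalizer) induced by conjugation by elements of the
normalizer `N_G(P)`. -/
def autG (P : Subgroup G) : Subgroup (MulAut (P.subgroupOf (Subgroup.normalizer (P : Set G)))) :=
  (MulAut.conjNormal (G := (Subgroup.normalizer (P : Set G))) (H := P.subgroupOf (Subgroup.normalizer (P : Set G)))).range

/-- For `S ≤ G`, the subgroup `Aut_S(P) ≤ Aut_G(P)` of automorphisms of `P`
induced by conjugation by elements of `N_S(P) = S ⊓ N_G(P)`. -/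
def autSub (S P : Subgroup G) : Subgroup (MulAut (P.subgroupOf (Subgroup.normalizer (P : Set G)))) :=
  Subgroup.map (MulAut.conjNormal (G := (Subgroup.normalizer (P : Set G))) (H := P.subgroupOf (Subgroup.normalizer (P : Set G))))
    ((S ⊓ (Subgroup.normalizer (P : Set G))).subgroupOf (Subgroup.normalizer (P : Set G)))

/-!
Let `T` be a Sylow `p`-subgroup of `N_G(P)` containing `N_S(P)`, and conjugate `T` into
`S` by some `g`. Then `P^g ≤ T^g ≤ S ⊓ N_G(P^g)`, so full normalization gives
`|T| ≤ |N_S(P^g)| ≤ |N_S(P)|`, and `N_S(P) = T` is Sylow in `N_G(P)`. Its image in the quotient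
`Aut_G(P)` of `N_G(P)` therefore has index prime to `p` as well.
-/

namespace Subgroup

theorem relIndex_map_range_dvd_index {G₁ G₂ : Type*} [Group G₁] [Group G₂] (f : G₁ →* G₂)
    (K : Subgroup G₁) : (K.map f).relIndex f.range ∣ K.index := by
  rw [MonoidHom.range_eq_map, relIndex_map_map, top_sup_eq, relIndex_top_right]
  exact index_dvd_of_le le_sup_left

end Subgroup

section FullyNormalized

open Subgroup

variable {G}

def IsFullyNormalized (S P : Subgroup G) : Prop :=
  ∀ g : G, P.map (MulAut.conj g).toMonoidHom ≤ S →
    Nat.card ↥(S ⊓ normalizer (P.map (MulAut.conj g).toMonoidHom : Set G)) ≤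
      Nat.card ↥(S ⊓ normalizer (P : Set G))

theorem IsPGroup.subgroupOf {p : ℕ} {H : Subgroup G} (hH : IsPGroup p H) (K : Subgroup G) :
    IsPGroup p (H.subgroupOf K) :=
  hH.comap_of_injective _ K.subtype_injective

theorem IsPGroup.exists_map_conj_le_inf_normalizer {p : ℕ} [Fact p.Prime] [Finite G]
    (S : Sylow p G) {P Q : Subgroup G} (hQ : IsPGroup p Q) (hQP : Q ≤ normalizer (P : Set G)) :
    ∃ g : G, Q.map (MulAut.conj g).toMonoidHom ≤
      (S : Subgroup G) ⊓ normalizer (P.map (MulAut.conj g).toMonoidHom : Set G) := by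
  obtain ⟨R, hQR⟩ := hQ.exists_le_sylow
  obtain ⟨g, hgR⟩ := MulAction.exists_smul_eq G R S
  refine ⟨g, le_inf ?_ ?_⟩
  · rw [← hgR]
    exact map_mono hQR
  · rw [← map_equiv_normalizer_eq P (MulAut.conj g)]
    exact map_mono hQP

theorem IsFullyNormalized.not_dvd_index_inf_normalizer {p : ℕ} [Fact p.Prime] [Finite G]
    {S : Sylow p G} {P : Subgroup G} (hPS : P ≤ S) (hP : IsFullyNormalized S P) :
    ¬ p ∣ (((S : Subgroup G) ⊓ normalizer (P : Set G)).subgroupOf (normalizer (P : Set G))).index := by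
  set N := normalizer (P : Set G)
  obtain ⟨T, hST⟩ := (S.isPGroup'.to_inf_left.subgroupOf N).exists_le_sylow
  set Q := (T : Subgroup N).map N.subtype
  obtain ⟨g, hQg⟩ := (T.isPGroup'.map N.subtype).exists_map_conj_le_inf_normalizer S
    (map_subtype_le (T : Subgroup N))
  have hPQ : P ≤ Q := fun x hx =>
    ⟨⟨x, le_normalizer hx⟩, hST (mem_subgroupOf.mpr ⟨hPS hx, le_normalizer hx⟩), rfl⟩
  have hcard : Nat.card T ≤ Nat.card (((S : Subgroup G) ⊓ N).subgroupOf N) := calc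
    Nat.card T = Nat.card (Q.map (MulAut.conj g).toMonoidHom) := by
      rw [card_map_of_injective (MulAut.conj g).injective, card_subtype]
    _ ≤ Nat.card ↥((S : Subgroup G) ⊓ normalizer (P.map (MulAut.conj g).toMonoidHom : Set G)) :=
      card_le_of_le hQg
    _ ≤ Nat.card ↥((S : Subgroup G) ⊓ N) := hP g ((map_mono hPQ).trans (hQg.trans inf_le_left))
    _ = Nat.card (((S : Subgroup G) ⊓ N).subgroupOf N) :=
      Nat.card_congr (subgroupOfEquivOfLe inf_le_right).toEquiv.symm
  rw [eq_of_le_of_card_ge hST hcard]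
  exact T.not_dvd_index

end FullyNormalized

theorem stmt_14 (p : ℕ) [Fact p.Prime] [Finite G]
    (S : Sylow p G) (P : Subgroup G) (hP : P ≤ (S : Subgroup G))
    (hfn : ∀ g : G, P.map (MulAut.conj g).toMonoidHom ≤ (S : Subgroup G) →
      Nat.card ((S : Subgroup G) ⊓ Subgroup.normalizer ((P.map (MulAut.conj g).toMonoidHom : Subgroup G) : Set G) : Subgroup G) ≤
        Nat.card ((S : Subgroup G) ⊓ (Subgroup.normalizer (P : Set G)) : Subgroup G)) :
    autSub G (S : Subgroup G) P ≤ autG G P ∧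
    IsPGroup p (autSub G (S : Subgroup G) P) ∧
    ¬ p ∣ ((autSub G (S : Subgroup G) P).subgroupOf (autG G P)).index :=
  ⟨Subgroup.map_le_range _ _,
    (S.isPGroup'.to_inf_left.subgroupOf _).map _,
    fun hdvd => IsFullyNormalized.not_dvd_index_inf_normalizer hP hfn
      (hdvd.trans (Subgroup.relIndex_map_range_dvd_index _ _))⟩
end
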